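/- Let r and s be positive integers with r \equiv 0 (mod 3) and s \equiv 3 (mod 6). Then for every nonnegative integer n: a_n(r,s) \equiv 1 (mod 9) if and only if every digit of the 3-adic expansion of n is 0 or 2, and in all other cases 9 divides a_n(r,s); in particular a_n(r,s) is never \equiv 2, 3, 4, 5, 6, 7, or 8 (mod 9). -/

import Mathlib

open Finset

/-- The generalised Apéry numbers `a_n(r,s) = ∑_{k=0}^n C(n,k)^r C(n+k,k)^s`. -/
def apery (r s n : ℕ) : ℕ :=
  ∑ k ∈ Finset.range (n + 1), n.choose k ^ r * (n + k).choose k ^ s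

/-- The number of digits among `d 0, …, d m` equal to `v`. -/
def digitCount (d : ℕ → ℕ) (m v : ℕ) : ℕ :=
  ((Finset.range (m + 1)).filter fun i => d i = v).card

/-- The number of occurrences of the string `ab` in the 3-adic expansion with digits
`d 0, …, d m` (using the convention that digits above position `m` are zero): indices `ν`
with `1 ≤ ν ≤ m + 1`, `d ν = a` and `d (ν - 1) = b`. -/
def occ (d : ℕ → ℕ) (m a b : ℕ) : ℕ :=
  ((Finset.Icc 1 (m + 1)).filter fun ν => d ν = a ∧ d (ν - 1) = b).card

/-- The 3-adic expansion of `n` (digits `d 0, …, d m`) has exactly one occurrence of the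
string `ab`, and all digits not belonging to this occurrence are `0` or `2`. -/
def uniqueOcc (d : ℕ → ℕ) (m a b : ℕ) : Prop :=
  occ d m a b = 1 ∧
  ∀ ν ∈ Finset.Icc 1 (m + 1), (d ν = a ∧ d (ν - 1) = b) →
    ∀ i ≤ m, i ≠ ν → i ≠ ν - 1 → (d i = 0 ∨ d i = 2)

/-! For `3 ∣ r` the power `x ^ r` modulo 9 depends only on `x` modulo 3, so Lucas' theorem
modulo 3 lifts to the summands of `a_n(r,s)` modulo 9. Grouping the summands by `k = 3j + e`
gives `a_{3q+d} ≡ λ_d a_q (mod 9)` with `λ_0 = λ_2 = 1` and `λ_1 = 1 + 2^s ≡ 0`, because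
`s ≡ 3 (mod 6)` makes `2^s ≡ -1 (mod 9)`. Iterating over the digits, `a_n ≡ ∏ λ_{n_i} (mod 9)`. -/

theorem Nat.ModEq.pow_modEq_sq_of_dvd {p a b e : ℕ} (h : a ≡ b [MOD p]) (he : p ∣ e) :
    a ^ e ≡ b ^ e [MOD p ^ 2] := by
  obtain ⟨t, rfl⟩ := he
  have h' : a ^ p ≡ b ^ p [MOD p ^ 2] := by
    rw [← Int.natCast_modEq_iff] at h ⊢
    push_cast
    exact Int.modEq_iff_dvd.2 (by simpa using dvd_sub_pow_of_dvd_sub h.dvd 1)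
  simpa only [pow_mul] using h'.pow t

theorem Finset.sum_range_mul_eq_sum_sum {β : Type*} [AddCommMonoid β] (f : ℕ → β) (c M : ℕ) :
    ∑ k ∈ range (c * M), f k = ∑ j ∈ range M, ∑ e ∈ range c, f (c * j + e) := by
  induction M with
  | zero => simp
  | succ M ih => rw [Nat.mul_succ, sum_range_add, ih, sum_range_succ]

theorem choose_pow_modEq_sq {p : ℕ} [Fact p.Prime] {e : ℕ} (he : p ∣ e) (n k : ℕ) :
    n.choose k ^ e ≡ ((n % p).choose (k % p) * (n / p).choose (k / p)) ^ e [MOD p ^ 2] :=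
  Choose.choose_modEq_choose_mod_mul_choose_div_nat.pow_modEq_sq_of_dvd he

theorem two_pow_eq_neg_one_zmod_nine {s : ℕ} (hs : s % 6 = 3) : (2 : ZMod 9) ^ s = -1 := by
  obtain ⟨u, rfl⟩ : ∃ u, s = 6 * u + 3 := ⟨s / 6, by omega⟩
  rw [pow_add, pow_mul, show (2 : ZMod 9) ^ 6 = 1 by decide, one_pow, one_mul]
  decide

def aperyTerm (r s n k : ℕ) : ℕ := n.choose k ^ r * (n + k).choose k ^ s

theorem apery_eq_sum_aperyTerm (r s n : ℕ) :
    apery r s n = ∑ k ∈ range (n + 1), aperyTerm r s n k := rfl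

section

variable {r s : ℕ}

/-- The summand vanishes modulo 9 unless `e ≤ d` and `d + e < 3` (no carry in Lucas' theorem);
for `d = e = 1` the second binomial coefficient contributes `2 ^ s ≡ -1`. -/
theorem aperyTerm_three_mul_add (hr : 0 < r) (hr3 : 3 ∣ r) (hs : s % 6 = 3)
    {d e : ℕ} (hd : d ≤ 2) (he : e ≤ 2) (q j : ℕ) :
    (aperyTerm r s (3 * q + d) (3 * j + e) : ZMod 9) =
      (if e = 0 then 1 else if d = 1 ∧ e = 1 then -1 else 0) * aperyTerm r s q j := by
  have : Fact (Nat.Prime 3) := ⟨Nat.prime_three⟩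
  have h1 := choose_pow_modEq_sq hr3 (3 * q + d) (3 * j + e)
  have h2 := choose_pow_modEq_sq (show 3 ∣ s by omega) (3 * q + d + (3 * j + e)) (3 * j + e)
  rw [show (3 * q + d) % 3 = d by omega, show (3 * q + d) / 3 = q by omega,
    show (3 * j + e) % 3 = e by omega, show (3 * j + e) / 3 = j by omega] at h1
  rw [show (3 * q + d + (3 * j + e)) % 3 = (d + e) % 3 by omega,
    show (3 * q + d + (3 * j + e)) / 3 = q + j + (d + e) / 3 by omega,
    show (3 * j + e) % 3 = e by omega, show (3 * j + e) / 3 = j by omega] at h2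
  simp only [aperyTerm, Nat.cast_mul, (ZMod.natCast_eq_natCast_iff _ _ 9).2 h1,
    (ZMod.natCast_eq_natCast_iff _ _ 9).2 h2, Nat.cast_pow, mul_pow]
  have hr0 : r ≠ 0 := hr.ne'
  have hs0 : s ≠ 0 := by omega
  interval_cases d <;> interval_cases e <;>
    simp [zero_pow hr0, zero_pow hs0, two_pow_eq_neg_one_zmod_nine hs]

theorem apery_three_mul_add (hr : 0 < r) (hr3 : 3 ∣ r) (hs : s % 6 = 3)
    {d : ℕ} (hd : d ≤ 2) (q : ℕ) :
    (apery r s (3 * q + d) : ZMod 9) = (if d = 0 ∨ d = 2 then 1 else 0) * apery r s q := by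
  have hext : apery r s (3 * q + d) = ∑ k ∈ range (3 * (q + 1)), aperyTerm r s (3 * q + d) k := by
    rw [apery_eq_sum_aperyTerm]
    refine sum_subset (range_subset_range.2 (by omega)) fun k hk hk' => ?_
    simp only [mem_range] at hk hk'
    rw [aperyTerm, Nat.choose_eq_zero_of_lt (by omega), zero_pow hr.ne', zero_mul]
  have hweights : ∑ e ∈ range 3, (if e = 0 then 1 else if d = 1 ∧ e = 1 then -1 else 0 : ZMod 9)
      = if d = 0 ∨ d = 2 then 1 else 0 := by
    interval_cases d <;> decide
  rw [hext, Nat.cast_sum, sum_range_mul_eq_sum_sum, apery_eq_sum_aperyTerm, Nat.cast_sum,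
    mul_sum]
  refine sum_congr rfl fun j _ => ?_
  rw [← hweights, sum_mul]
  exact sum_congr rfl fun e he =>
    aperyTerm_three_mul_add hr hr3 hs hd (by simp at he; omega) q j

theorem apery_sum_digit_mul_three_pow (hr : 0 < r) (hr3 : 3 ∣ r) (hs : s % 6 = 3)
    (m : ℕ) {d : ℕ → ℕ} (hd : ∀ i, d i ≤ 2) :
    (apery r s (∑ i ∈ range m, d i * 3 ^ i) : ZMod 9) =
      ∏ i ∈ range m, if d i = 0 ∨ d i = 2 then 1 else 0 := by
  induction m generalizing d with
  | zero => simp [apery]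
  | succ m ih =>
    have hsplit : ∑ i ∈ range (m + 1), d i * 3 ^ i
        = 3 * ∑ i ∈ range m, d (i + 1) * 3 ^ i + d 0 := by
      rw [sum_range_succ', mul_sum]
      simp only [pow_succ]
      ring_nf
    rw [hsplit, apery_three_mul_add hr hr3 hs (hd 0), ih fun i => hd (i + 1), prod_range_succ',
      mul_comm]

end

theorem apery_mod_nine_r0_s3_general (r s : ℕ) (hr : 0 < r)
    (hr3 : r % 3 = 0) (hs6 : s % 6 = 3)
    (n m : ℕ) (d : ℕ → ℕ) (hd2 : ∀ i, d i ≤ 2)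
    (hn : n = ∑ i ∈ Finset.range (m + 1), d i * 3 ^ i) :
    (apery r s n ≡ 1 [MOD 9] ↔ (∀ i ≤ m, d i = 0 ∨ d i = 2)) ∧
    (¬ (∀ i ≤ m, d i = 0 ∨ d i = 2) → 9 ∣ apery r s n) ∧
    ¬ (apery r s n ≡ 2 [MOD 9]) ∧
    ¬ (apery r s n ≡ 3 [MOD 9]) ∧
    ¬ (apery r s n ≡ 4 [MOD 9]) ∧
    ¬ (apery r s n ≡ 5 [MOD 9]) ∧
    ¬ (apery r s n ≡ 6 [MOD 9]) ∧
    ¬ (apery r s n ≡ 7 [MOD 9]) ∧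
    ¬ (apery r s n ≡ 8 [MOD 9]) := by
  have hcast : (apery r s n : ZMod 9) = if ∀ i ≤ m, d i = 0 ∨ d i = 2 then 1 else 0 := by
    rw [hn, apery_sum_digit_mul_three_pow hr (Nat.dvd_of_mod_eq_zero hr3) hs6 (m + 1) hd2,
      prod_boole]
    simp only [mem_range, Nat.lt_succ_iff]
  have hmodEq (c : ℕ) : apery r s n ≡ c [MOD 9] ↔
      (if ∀ i ≤ m, d i = 0 ∨ d i = 2 then 1 else 0 : ZMod 9) = c := by
    rw [← ZMod.natCast_eq_natCast_iff, hcast]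
  have hne (c : ℕ) (h0 : (c : ZMod 9) ≠ 0) (h1 : (c : ZMod 9) ≠ 1) :
      ¬ apery r s n ≡ c [MOD 9] := by
    rw [hmodEq]
    split_ifs <;> simp_all [eq_comm]
  refine ⟨?_, fun h => ?_, hne 2 (by decide) (by decide), hne 3 (by decide) (by decide),
    hne 4 (by decide) (by decide), hne 5 (by decide) (by decide), hne 6 (by decide) (by decide),
    hne 7 (by decide) (by decide), hne 8 (by decide) (by decide)⟩
  · rw [hmodEq]
    split_ifs with h
    · exact iff_of_true (by simp) h
    · exact iff_of_false (by decide) h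
  · rw [← ZMod.natCast_eq_zero_iff, hcast, if_neg h]

/-- Apéry numbers mod 9 for `r ≡ 0 (mod 3)`, `s ≡ 3 (mod 6)`. -/
theorem apery_mod_nine_r0_s3 (r s : ℕ) (hr : 0 < r) (hs : 0 < s)
    (hr3 : r % 3 = 0) (hs6 : s % 6 = 3)
    (n m : ℕ) (d : ℕ → ℕ) (hd2 : ∀ i, d i ≤ 2) (hd0 : ∀ i, m < i → d i = 0)
    (hn : n = ∑ i ∈ Finset.range (m + 1), d i * 3 ^ i) :
    (apery r s n ≡ 1 [MOD 9] ↔ (∀ i ≤ m, d i = 0 ∨ d i = 2)) ∧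
    (¬ (∀ i ≤ m, d i = 0 ∨ d i = 2) → 9 ∣ apery r s n) ∧
    ¬ (apery r s n ≡ 2 [MOD 9]) ∧
    ¬ (apery r s n ≡ 3 [MOD 9]) ∧
    ¬ (apery r s n ≡ 4 [MOD 9]) ∧
    ¬ (apery r s n ≡ 5 [MOD 9]) ∧
    ¬ (apery r s n ≡ 6 [MOD 9]) ∧
    ¬ (apery r s n ≡ 7 [MOD 9]) ∧
    ¬ (apery r s n ≡ 8 [MOD 9]) :=
  apery_mod_nine_r0_s3_general r s hr hr3 hs6 n m d hd2 hn
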